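/- Let n ≥ 3 and let R ∈ S²_B(so(n)) be a 2-nonnegative curvature operator, with λ_min the smallest eigenvalue of R. Then every eigenvalue of the Ricci tensor of R is at least (n−3)·|λ_min|; that is, Ric(R) − (n−3)·|λ_min|·id is positive semidefinite. -/

import Mathlib

/-!
Common setup: we identify ⋀²ℝⁿ with the Lie algebra `so n` of real skew-symmetric
`n × n` matrices, sending `eᵢ ∧ eⱼ` to the rotation by `π/2` in the plane spanned by
`eᵢ, eⱼ`; the inner product on `so n` is `⟪A, B⟫ = -(1/2)·tr (A * B)`, and under this
identification `v ∧ w` corresponds to the skew-symmetric matrix `v wᵀ - w vᵀ`, while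
the wedge `A ∧ B` of two endomorphisms of `ℝⁿ` acts on a skew matrix `M` by
`M ↦ (1/2)(A M Bᵀ + B M Aᵀ)` (the unique linear extension of
`v∧w ↦ (1/2)(Av ∧ Bw + Bv ∧ Aw)`).
-/

noncomputable section

namespace BW

open Matrix

abbrev Mat (n : ℕ) := Matrix (Fin n) (Fin n) ℝ

/-- `so n`: the space of real skew-symmetric `n × n` matrices (≅ ⋀²ℝⁿ). -/
def so (n : ℕ) : Submodule ℝ (Mat n) where
  carrier := {A | Aᵀ = -A}
  add_mem' := by
    intro A B hA hB
    simp only [Set.mem_setOf_eq] at *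
    rw [Matrix.transpose_add, hA, hB, neg_add]
  zero_mem' := by simp
  smul_mem' := by
    intro c A hA
    simp only [Set.mem_setOf_eq] at *
    rw [Matrix.transpose_smul, hA, smul_neg]

variable {n : ℕ}

lemma mem_so_iff {A : Mat n} : A ∈ so n ↔ Aᵀ = -A := Iff.rfl

/-- The inner product `⟨A,B⟩ = -(1/2)·tr(AB)` on `so n`. -/
def ip (A B : so n) : ℝ := -(1/2) * Matrix.trace ((A : Mat n) * (B : Mat n))

/-- `ip` as a linear map in the second variable. -/
def ipL (A : so n) : so n →ₗ[ℝ] ℝ where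
  toFun B := ip A B
  map_add' B C := by
    simp only [ip, Submodule.coe_add, Matrix.mul_add, Matrix.trace_add]; ring
  map_smul' c B := by
    simp only [ip, SetLike.val_smul, Matrix.mul_smul, Matrix.trace_smul, smul_eq_mul,
      RingHom.id_apply]; ring

/-- The Lie bracket (matrix commutator) on `so n`. -/
def brk (A B : so n) : so n :=
  ⟨(A : Mat n) * (B : Mat n) - (B : Mat n) * (A : Mat n), by
    have hA : (A : Mat n)ᵀ = -(A : Mat n) := A.2
    have hB : (B : Mat n)ᵀ = -(B : Mat n) := B.2
    rw [mem_so_iff, Matrix.transpose_sub, Matrix.transpose_mul, Matrix.transpose_mul, hA, hB]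
    noncomm_ring⟩

/-- Auxiliary linear map underlying `A ∧ B`. -/
def wedgeAux (A B : Mat n) : Mat n →ₗ[ℝ] Mat n where
  toFun M := (1/2 : ℝ) • (A * M * Bᵀ + B * M * Aᵀ)
  map_add' M N := by
    simp only [mul_add, add_mul, smul_add]
    module
  map_smul' c M := by
    simp only [mul_smul_comm, smul_mul_assoc, RingHom.id_apply]
    module

lemma wedgeAux_mem (A B : Mat n) : ∀ M ∈ so n, wedgeAux A B M ∈ so n := by
  intro M hM
  rw [mem_so_iff] at hM ⊢
  show ((1/2 : ℝ) • (A * M * Bᵀ + B * M * Aᵀ))ᵀ = -((1/2 : ℝ) • (A * M * Bᵀ + B * M * Aᵀ))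
  rw [Matrix.transpose_smul, Matrix.transpose_add, Matrix.transpose_mul, Matrix.transpose_mul,
    Matrix.transpose_mul, Matrix.transpose_mul, Matrix.transpose_transpose,
    Matrix.transpose_transpose, hM]
  simp only [Matrix.neg_mul, Matrix.mul_neg, Matrix.mul_assoc, smul_neg, neg_add, smul_add]
  abel

/-- The wedge `A ∧ B` of two endomorphisms of ℝⁿ, as an endomorphism of `so n ≅ ⋀²ℝⁿ`:
the unique linear map with `(A ∧ B)(v ∧ w) = (1/2)(Av ∧ Bw + Bv ∧ Aw)`. -/
def wedge (A B : Mat n) : Module.End ℝ (so n) :=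
  (wedgeAux A B).restrict (p := so n) (q := so n) (wedgeAux_mem A B)

/-- The index set of pairs `i < j`. -/
def pairs (n : ℕ) : Finset (Fin n × Fin n) := Finset.univ.filter fun p => p.1 < p.2

/-- The standard basis vector `eᵢ` of ℝⁿ. -/
def evec (i : Fin n) : Fin n → ℝ := fun k => if k = i then 1 else 0

/-- `v ∧ w`, as an element of `so n ≅ ⋀²ℝⁿ`. -/
def vwedge (v w : Fin n → ℝ) : so n :=
  ⟨Matrix.of fun i j => v i * w j - w i * v j, by
    rw [mem_so_iff]
    ext i j
    simp only [Matrix.transpose_apply, Matrix.of_apply, Matrix.neg_apply]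
    ring⟩

/-- The orthonormal basis vector `eᵢ ∧ eⱼ` of `so n ≅ ⋀²ℝⁿ`. -/
def bvec (i j : Fin n) : so n := vwedge (evec i) (evec j)

/-- Hamilton's sharp product `R # S`: the self-adjoint endomorphism of `so n` determined by
`⟨(R#S)h, h⟩ = (1/2)·Σ_{α,β} ⟨[R(b_α), S(b_β)], h⟩·⟨[b_α, b_β], h⟩`,
where `(b_α)` is the orthonormal basis `(eᵢ ∧ eⱼ)_{i<j}` of `so n`. -/
def sharp (R S : Module.End ℝ (so n)) : Module.End ℝ (so n) :=
  (1/4 : ℝ) • ∑ p ∈ pairs n, ∑ q ∈ pairs n,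
    ((ipL (brk (R (bvec p.1 p.2)) (S (bvec q.1 q.2)))).smulRight
        (brk (bvec p.1 p.2) (bvec q.1 q.2))
      + (ipL (brk (bvec p.1 p.2) (bvec q.1 q.2))).smulRight
        (brk (R (bvec p.1 p.2)) (S (bvec q.1 q.2))))

/-- The right-hand side `R² + R^#` of Hamilton's ODE. -/
def Qode (R : Module.End ℝ (so n)) : Module.End ℝ (so n) := R * R + sharp R R

/-- The coordinates `R_{ijkl} = ⟨R(eᵢ∧eⱼ), e_k∧e_l⟩` of an endomorphism of `so n`. -/
def Rcoord (R : Module.End ℝ (so n)) (i j k l : Fin n) : ℝ := ip (R (bvec i j)) (bvec k l)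

/-- Self-adjointness with respect to the inner product `ip`. -/
def selfAdjEnd (R : Module.End ℝ (so n)) : Prop := ∀ X Y : so n, ip (R X) Y = ip X (R Y)

/-- A curvature operator: a self-adjoint endomorphism of `so n ≅ ⋀²ℝⁿ` satisfying the
first Bianchi identity.  (`isCurvOp` carves out `S²_B(so n)`.) -/
def isCurvOp (R : Module.End ℝ (so n)) : Prop :=
  selfAdjEnd R ∧
    ∀ i j k l : Fin n, Rcoord R i j k l + Rcoord R j k i l + Rcoord R k i j l = 0

/-- The Ricci tensor `Ric_{ij} = Σ_k R_{ikjk}` of `R`. -/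
def RicM (R : Module.End ℝ (so n)) : Mat n := Matrix.of fun i j => ∑ k, Rcoord R i k j k

/-- `λ̄ = tr(Ric)/n`. -/
def lamb (R : Module.End ℝ (so n)) : ℝ := Matrix.trace (RicM R) / (n : ℝ)

/-- The traceless Ricci tensor `Ric₀ = Ric - (tr Ric / n)·id`. -/
def Ric0 (R : Module.End ℝ (so n)) : Mat n := RicM R - lamb R • (1 : Mat n)

/-- `σ = tr(Ric₀²)/n`. -/
def sigmaR (R : Module.End ℝ (so n)) : ℝ := Matrix.trace (Ric0 R * Ric0 R) / (n : ℝ)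

/-- `R_I = (λ̄/(n-1))·(id ∧ id)`, the projection of `R` onto `⟨I⟩`. -/
def RI (R : Module.End ℝ (so n)) : Module.End ℝ (so n) :=
  (lamb R / ((n : ℝ) - 1)) • wedge (1 : Mat n) (1 : Mat n)

/-- `R_{Ric₀} = (2/(n-2))·(Ric₀ ∧ id)`, the projection of `R` onto `⟨Ric₀⟩`. -/
def RRic0 (R : Module.End ℝ (so n)) : Module.End ℝ (so n) :=
  (2 / ((n : ℝ) - 2)) • wedge (Ric0 R) (1 : Mat n)

/-- The linear map `ℓ_{a,b}(R) = R + 2(n-1)a·R_I + (n-2)b·R_{Ric₀}`. -/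
def lab (a b : ℝ) (R : Module.End ℝ (so n)) : Module.End ℝ (so n) :=
  R + (2 * ((n : ℝ) - 1) * a) • RI R + (((n : ℝ) - 2) * b) • RRic0 R

/-- Positive semidefiniteness of the quadratic form of an endomorphism of `so n`. -/
def posSemidefEnd (R : Module.End ℝ (so n)) : Prop := ∀ X : so n, 0 ≤ ip (R X) X

/-- Positive definiteness of the quadratic form of an endomorphism of `so n`. -/
def posDefEnd (R : Module.End ℝ (so n)) : Prop := ∀ X : so n, X ≠ 0 → 0 < ip (R X) X

/-- `R` is 2-nonnegative: the sum of its two smallest eigenvalues is nonnegative;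
equivalently (Ky Fan), `q_R(X) + q_R(Y) ≥ 0` for all orthonormal pairs `X, Y`. -/
def twoNonneg (R : Module.End ℝ (so n)) : Prop :=
  ∀ X Y : so n, ip X X = 1 → ip Y Y = 1 → ip X Y = 0 → 0 ≤ ip (R X) X + ip (R Y) Y

/-- The (Frobenius) norm of an endomorphism of `so n`, computed in the orthonormal
basis `(eᵢ ∧ eⱼ)_{i<j}`. -/
def endNorm (R : Module.End ℝ (so n)) : ℝ :=
  Real.sqrt (∑ p ∈ pairs n, ip (R (bvec p.1 p.2)) (R (bvec p.1 p.2)))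

/-- The tangent cone `T_R C`: the closure of `{t·(S - R) : S ∈ C, t ≥ 0}`. -/
def tangCone (C : Set (Module.End ℝ (so n))) (R : Module.End ℝ (so n)) :
    Set (Module.End ℝ (so n)) :=
  {X | ∀ ε > 0, ∃ S ∈ C, ∃ t : ℝ, 0 ≤ t ∧ endNorm (X - t • (S - R)) < ε}

/-- `C` is a closed subset of the space of endomorphisms of `so n`. -/
def isClosedSet (C : Set (Module.End ℝ (so n))) : Prop :=
  ∀ X, (∀ ε > 0, ∃ Y ∈ C, endNorm (X - Y) < ε) → X ∈ C

/-- The interior of `C` relative to the subspace `S²_B(so n)` of curvature operators. -/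
def interiorCurv (C : Set (Module.End ℝ (so n))) : Set (Module.End ℝ (so n)) :=
  {X | isCurvOp X ∧ ∃ ε > 0, ∀ Y, isCurvOp Y → endNorm (Y - X) < ε → Y ∈ C}

/-- Auxiliary linear map `M ↦ g M gᵀ` on matrices. -/
def conjAux (g : Mat n) : Mat n →ₗ[ℝ] Mat n where
  toFun M := g * M * gᵀ
  map_add' M N := by simp only [mul_add, add_mul]
  map_smul' c M := by simp only [mul_smul_comm, smul_mul_assoc, RingHom.id_apply]

/-- `⋀²g` : the action `M ↦ g M gᵀ` of `g` on `so n ≅ ⋀²ℝⁿ` (for `g` orthogonal this is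
the second exterior power of `g`). -/
def conjSo (g : Mat n) : Module.End ℝ (so n) :=
  (conjAux g).restrict (p := so n) (q := so n) (fun M hM => by
    rw [mem_so_iff] at hM ⊢
    show (g * M * gᵀ)ᵀ = -(g * M * gᵀ)
    rw [Matrix.transpose_mul, Matrix.transpose_mul, Matrix.transpose_transpose, hM]
    simp only [Matrix.neg_mul, Matrix.mul_neg, Matrix.mul_assoc])

/-- The action `g · R = (⋀²g) ∘ R ∘ (⋀²g)⁻¹` of an orthogonal matrix `g`
(whose inverse is `gᵀ`) on endomorphisms of `so n`. -/
def onAct (g : Mat n) (R : Module.End ℝ (so n)) : Module.End ℝ (so n) :=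
  conjSo g * R * conjSo gᵀ

/-- Two sets are at Hausdorff distance at most `ε` from each other. -/
def hdClose (A B : Set (Module.End ℝ (so n))) (ε : ℝ) : Prop :=
  (∀ X ∈ A, ∃ Y ∈ B, endNorm (X - Y) ≤ ε) ∧ ∀ Y ∈ B, ∃ X ∈ A, endNorm (X - Y) ≤ ε

/-- The truncation `C ∩ {‖R‖ ≤ 1}`. -/
def truncSet (C : Set (Module.End ℝ (so n))) : Set (Module.End ℝ (so n)) :=
  {R ∈ C | endNorm R ≤ 1}

/-!
The quadratic form of the Ricci tensor is `x ↦ ∑ₖ ⟨R (x ∧ eₖ), x ∧ eₖ⟩`, and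
`∑ₖ |x ∧ eₖ|² = (n - 1) |x|²`. If `λ_min ≥ 0` every term is at least `λ_min |x ∧ eₖ|²`.
If `λ_min < 0`, let `X` be a unit eigenvector for `λ_min`; 2-nonnegativity gives
`⟨R Z, Z⟩ ≥ |λ_min| (|Z|² - 2 ⟨Z, X⟩²)` for every `Z`, and for `Z = x ∧ eₖ` the
correction terms add up to `2 |X x|² ≤ 2 |X|² |x|² = 2 |x|²`.
-/

lemma ip_comm (A B : so n) : ip A B = ip B A := by
  simp only [ip, Matrix.trace_mul_comm (A : Mat n)]

lemma ip_add_left (A B C : so n) : ip (A + B) C = ip A C + ip B C := by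
  simp only [ip, Submodule.coe_add, Matrix.add_mul, Matrix.trace_add]; ring

lemma ip_smul_left (c : ℝ) (A B : so n) : ip (c • A) B = c * ip A B := by
  simp only [ip, SetLike.val_smul, Matrix.smul_mul, Matrix.trace_smul, smul_eq_mul]; ring

lemma ip_sub_left (A B C : so n) : ip (A - B) C = ip A C - ip B C := by
  simp only [ip, Submodule.coe_sub, Matrix.sub_mul, Matrix.trace_sub]; ring

lemma ip_add_right (A B C : so n) : ip A (B + C) = ip A B + ip A C := (ipL A).map_add B C

lemma ip_smul_right (c : ℝ) (A B : so n) : ip A (c • B) = c * ip A B := (ipL A).map_smul c B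

lemma ip_sub_right (A B C : so n) : ip A (B - C) = ip A B - ip A C := (ipL A).map_sub B C

lemma ip_sum_right {ι : Type*} (s : Finset ι) (A : so n) (f : ι → so n) :
    ip A (∑ i ∈ s, f i) = ∑ i ∈ s, ip A (f i) := map_sum (ipL A) f s

lemma ip_sum_left {ι : Type*} (s : Finset ι) (f : ι → so n) (B : so n) :
    ip (∑ i ∈ s, f i) B = ∑ i ∈ s, ip (f i) B := by
  simp only [ip_comm _ B, ip_sum_right]

lemma skew_apply (A : so n) (i j : Fin n) : (A : Mat n) j i = -(A : Mat n) i j := by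
  simpa using congrFun (congrFun A.2 i) j

lemma ip_apply (A B : so n) :
    ip A B = (1/2) * ∑ i, ∑ j, (A : Mat n) i j * (B : Mat n) i j := by
  have h : ∀ i j, (A : Mat n) i j * (B : Mat n) j i = -((A : Mat n) i j * (B : Mat n) i j) :=
    fun i j => by rw [skew_apply B, mul_neg]
  simp only [ip, Matrix.trace, Matrix.diag, Matrix.mul_apply, h, Finset.sum_neg_distrib]
  ring

lemma ip_self_nonneg (A : so n) : 0 ≤ ip A A := by
  rw [ip_apply]
  exact mul_nonneg (by norm_num) (Finset.sum_nonneg fun _ _ => Finset.sum_nonneg fun _ _ =>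
    mul_self_nonneg _)

lemma ip_self_pos {A : so n} (hA : A ≠ 0) : 0 < ip A A := by
  obtain ⟨i, j, hij⟩ : ∃ i j, (A : Mat n) i j ≠ 0 := by
    by_contra! h
    exact hA (Subtype.ext (Matrix.ext h))
  rw [ip_apply]
  have : 0 < ∑ i, ∑ j, (A : Mat n) i j * (A : Mat n) i j :=
    Finset.sum_pos' (fun _ _ => Finset.sum_nonneg fun _ _ => mul_self_nonneg _)
      ⟨i, Finset.mem_univ _, Finset.sum_pos' (fun _ _ => mul_self_nonneg _)
        ⟨j, Finset.mem_univ _, mul_self_pos.mpr hij⟩⟩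
  positivity

lemma ip_sq_le_mul_ip_self (A B : so n) : ip A B ^ 2 ≤ ip A A * ip B B := by
  rcases eq_or_ne B 0 with rfl | hB
  · simp [ip]
  have hpos := ip_self_pos hB
  have h := ip_self_nonneg (ip B B • A - ip A B • B)
  simp only [ip_sub_left, ip_sub_right, ip_smul_left, ip_smul_right, ip_comm B A] at h
  nlinarith

lemma vwedge_apply (v w : Fin n → ℝ) (i j : Fin n) :
    (vwedge v w : Mat n) i j = v i * w j - w i * v j := rfl

lemma evec_eq_single (i : Fin n) : evec i = Pi.single i 1 := by
  ext k; simp [evec, Pi.single_apply]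

lemma vwedge_eq_sum_left (v w : Fin n → ℝ) : vwedge v w = ∑ i, v i • vwedge (evec i) w := by
  apply Subtype.ext; ext a b
  simp [Matrix.sum_apply, vwedge_apply, evec, mul_sub, Finset.sum_sub_distrib]
  ring

lemma vwedge_eq_sum_right (v w : Fin n → ℝ) : vwedge v w = ∑ k, w k • vwedge v (evec k) := by
  apply Subtype.ext; ext a b
  simp [Matrix.sum_apply, vwedge_apply, evec, mul_sub, Finset.sum_sub_distrib]
  ring

lemma ip_vwedge_vwedge (v w x y : Fin n → ℝ) :
    ip (vwedge v w) (vwedge x y) = (v ⬝ᵥ x) * (w ⬝ᵥ y) - (v ⬝ᵥ y) * (w ⬝ᵥ x) := by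
  have h : ∀ i j, (vwedge v w : Mat n) i j * (vwedge x y : Mat n) i j =
      v i * x i * (w j * y j) - v i * y i * (w j * x j) - w i * x i * (v j * y j)
        + w i * y i * (v j * x j) := fun i j => by simp only [vwedge_apply]; ring
  simp only [ip_apply, h, Finset.sum_add_distrib, Finset.sum_sub_distrib, ← Finset.mul_sum,
    ← Finset.sum_mul, dotProduct]
  ring

lemma ip_vwedge_evec_self (v : Fin n → ℝ) (k : Fin n) :
    ip (vwedge v (evec k)) (vwedge v (evec k)) = v ⬝ᵥ v - v k ^ 2 := by
  simp [ip_vwedge_vwedge, evec_eq_single, sq]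

lemma ip_vwedge_evec (v : Fin n → ℝ) (k : Fin n) (X : so n) :
    ip (vwedge v (evec k)) X = -((X : Mat n) *ᵥ v) k := by
  have h : ∀ i, v i * (X : Mat n) i k = -((X : Mat n) k i * v i) := fun i => by
    rw [skew_apply X k i]; ring
  simp [ip_apply, vwedge_apply, evec, sub_mul, Finset.sum_sub_distrib, ite_mul, Matrix.mulVec,
    dotProduct, h]
  simp only [mul_comm (v _)]
  ring

lemma sum_ip_vwedge_evec_self (v : Fin n → ℝ) :
    ∑ k, ip (vwedge v (evec k)) (vwedge v (evec k)) = ((n : ℝ) - 1) * (v ⬝ᵥ v) := by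
  simp only [ip_vwedge_evec_self, Finset.sum_sub_distrib, Finset.sum_const, Finset.card_univ,
    Fintype.card_fin, nsmul_eq_mul, dotProduct, sq]
  ring

lemma sum_ip_vwedge_evec_sq (v : Fin n → ℝ) (X : so n) :
    ∑ k, ip (vwedge v (evec k)) X ^ 2 = ((X : Mat n) *ᵥ v) ⬝ᵥ ((X : Mat n) *ᵥ v) := by
  simp only [ip_vwedge_evec, neg_mul_neg, dotProduct, sq]

lemma dotProduct_mulVec_self_eq_zero (X : so n) (v : Fin n → ℝ) :
    v ⬝ᵥ ((X : Mat n) *ᵥ v) = 0 := by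
  have h : v ⬝ᵥ ((X : Mat n) *ᵥ v) = -(v ⬝ᵥ ((X : Mat n) *ᵥ v)) := by
    conv_lhs => rw [Matrix.dotProduct_mulVec, ← Matrix.mulVec_transpose, X.2, dotProduct_comm]
    rw [Matrix.neg_mulVec, dotProduct_neg]
  linarith

/-- Pair `X` with `v ∧ X v` and apply Cauchy–Schwarz; since `v ⊥ X v`,
`|v ∧ X v|² = |v|² |X v|²`. -/
lemma mulVec_dotProduct_self_le (X : so n) (v : Fin n → ℝ) :
    ((X : Mat n) *ᵥ v) ⬝ᵥ ((X : Mat n) *ᵥ v) ≤ ip X X * (v ⬝ᵥ v) := by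
  set w := (X : Mat n) *ᵥ v
  have hpair : ip (vwedge v w) X = -(w ⬝ᵥ w) := by
    rw [vwedge_eq_sum_right, ip_sum_left]
    simp only [ip_smul_left, ip_vwedge_evec, dotProduct, mul_neg, Finset.sum_neg_distrib, w]
  have hcs := ip_sq_le_mul_ip_self (vwedge v w) X
  rw [hpair, ip_vwedge_vwedge, dotProduct_mulVec_self_eq_zero, neg_sq] at hcs
  have hw : 0 ≤ w ⬝ᵥ w := by simpa using dotProduct_self_star_nonneg w
  have hbound : 0 ≤ ip X X * (v ⬝ᵥ v) :=
    mul_nonneg (ip_self_nonneg X) (by simpa using dotProduct_self_star_nonneg v)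
  rcases hw.eq_or_lt with h0 | hpos
  · rw [← h0]; exact hbound
  · nlinarith

lemma ricM_isSymm {R : Module.End ℝ (so n)} (hR : selfAdjEnd R) : (RicM R).IsSymm := by
  ext i j
  simp only [RicM, Matrix.transpose_apply, Matrix.of_apply]
  exact Finset.sum_congr rfl fun k _ => by rw [Rcoord, hR, ip_comm, Rcoord]

lemma dotProduct_ricM_mulVec (R : Module.End ℝ (so n)) (x : Fin n → ℝ) :
    x ⬝ᵥ (RicM R *ᵥ x) = ∑ k, ip (R (vwedge x (evec k))) (vwedge x (evec k)) := by
  simp only [vwedge_eq_sum_left x, map_sum, map_smul, ip_sum_left, ip_sum_right, ip_smul_left,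
    ip_smul_right]
  simp only [dotProduct, Matrix.mulVec, RicM, Matrix.of_apply, Rcoord, bvec, Finset.mul_sum,
    Finset.sum_mul]
  conv_rhs => rw [Finset.sum_comm]; enter [2, j]; rw [Finset.sum_comm]
  rw [Finset.sum_comm]
  refine Finset.sum_congr rfl fun j _ => Finset.sum_congr rfl fun i _ =>
    Finset.sum_congr rfl fun k _ => by ring

section TwoNonneg

variable {R : Module.End ℝ (so n)}

lemma exists_ip_self_eq_one_of_eigenvector {μ : ℝ} (h : ∃ X : so n, X ≠ 0 ∧ R X = μ • X) :
    ∃ X : so n, ip X X = 1 ∧ R X = μ • X := by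
  obtain ⟨X, hX, hRX⟩ := h
  have hpos := ip_self_pos hX
  refine ⟨(Real.sqrt (ip X X))⁻¹ • X, ?_, by rw [map_smul, hRX, smul_comm]⟩
  rw [ip_smul_left, ip_smul_right, ← mul_assoc, ← mul_inv, Real.mul_self_sqrt hpos.le,
    inv_mul_cancel₀ hpos.ne']

lemma twoNonneg.mul_ip_self_add_nonneg (h2 : twoNonneg R) {X Y : so n} (hX : ip X X = 1)
    (hXY : ip X Y = 0) : 0 ≤ ip (R X) X * ip Y Y + ip (R Y) Y := by
  rcases eq_or_ne Y 0 with rfl | hY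
  · simp [ip]
  have hpos := ip_self_pos hY
  set s := Real.sqrt (ip Y Y)
  have hs : s * s = ip Y Y := Real.mul_self_sqrt hpos.le
  have h := h2 X (s⁻¹ • Y) hX
    (by rw [ip_smul_left, ip_smul_right, ← mul_assoc, ← mul_inv, hs, inv_mul_cancel₀ hpos.ne'])
    (by rw [ip_smul_right, hXY, mul_zero])
  rw [map_smul, ip_smul_left, ip_smul_right, ← mul_assoc, ← mul_inv, hs] at h
  have := mul_nonneg hpos.le h
  rwa [mul_add, ← mul_assoc, mul_inv_cancel₀ hpos.ne', one_mul, mul_comm] at this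

/-- Split `Z = W + ⟨Z, X⟩ X` with `W ⊥ X`: the `X`-part contributes `μ ⟨Z, X⟩²` and, by
2-nonnegativity, the `W`-part at least `-μ |W|²`. -/
lemma twoNonneg.neg_mul_le_ip_apply_self (hR : selfAdjEnd R) (h2 : twoNonneg R) {μ : ℝ}
    {X : so n} (hX : ip X X = 1) (hRX : R X = μ • X) (Z : so n) :
    -μ * (ip Z Z - 2 * ip Z X ^ 2) ≤ ip (R Z) Z := by
  set c := ip Z X
  set W := Z - c • X
  have hXW : ip X W = 0 := by
    simp only [W, ip_sub_right, ip_smul_right, hX, ip_comm X Z, c]; ring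
  have hRXW : ip (R W) X = 0 := by rw [hR, hRX, ip_smul_right, ip_comm, hXW, mul_zero]
  have hZ : Z = W + c • X := by simp only [W, sub_add_cancel]
  have hWW : ip W W = ip Z Z - c ^ 2 := by
    rw [hZ]
    simp only [ip_add_left, ip_add_right, ip_smul_left, ip_smul_right, hX, hXW, ip_comm W X]
    ring
  have hRZ : ip (R Z) Z = μ * c ^ 2 + ip (R W) W := by
    rw [hZ, map_add, map_smul, hRX, smul_smul]
    simp only [ip_add_left, ip_add_right, ip_smul_left, ip_smul_right, hX, hXW, hRXW]
    ring
  have h := h2.mul_ip_self_add_nonneg hX hXW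
  rw [hRX, ip_smul_left, hX, mul_one, hWW] at h
  linarith

lemma twoNonneg.abs_mul_le_ip_apply_self (hR : selfAdjEnd R) (h2 : twoNonneg R) {μ : ℝ}
    (hμ : ∀ Y : so n, μ * ip Y Y ≤ ip (R Y) Y) {X : so n} (hX : ip X X = 1)
    (hRX : R X = μ • X) (Z : so n) :
    |μ| * (ip Z Z - 2 * ip Z X ^ 2) ≤ ip (R Z) Z := by
  rcases le_or_gt 0 μ with hμ0 | hμ0
  · rw [abs_of_nonneg hμ0]
    nlinarith [hμ Z, sq_nonneg (ip Z X)]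
  · rw [abs_of_neg hμ0]
    exact h2.neg_mul_le_ip_apply_self hR hX hRX Z

end TwoNonneg

theorem stmt_14_general {n : ℕ} (R : Module.End ℝ (so n)) (hR : isCurvOp R)
    (h2 : twoNonneg R) (lmin : ℝ)
    (heig : ∃ X : so n, X ≠ 0 ∧ R X = lmin • X)
    (hlb : ∀ X : so n, lmin * ip X X ≤ ip (R X) X) :
    (RicM R - (((n : ℝ) - 3) * |lmin|) • (1 : Mat n)).PosSemidef := by
  obtain ⟨X, hX, hRX⟩ := exists_ip_self_eq_one_of_eigenvector heig
  refine Matrix.PosSemidef.of_dotProduct_mulVec_nonneg ?_ fun x => ?_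
  · rw [Matrix.isHermitian_iff_isSymm]
    exact (ricM_isSymm hR.1).sub (Matrix.isSymm_one.smul _)
  have hsum := Finset.sum_le_sum fun k (_ : k ∈ Finset.univ) =>
    h2.abs_mul_le_ip_apply_self hR.1 hlb hX hRX (vwedge x (evec k))
  rw [← Finset.mul_sum, Finset.sum_sub_distrib, ← Finset.mul_sum, sum_ip_vwedge_evec_self,
    sum_ip_vwedge_evec_sq, ← dotProduct_ricM_mulVec] at hsum
  have hskew := mulVec_dotProduct_self_le X x
  rw [hX, one_mul] at hskew
  simp only [star_trivial, Matrix.sub_mulVec, Matrix.smul_mulVec, Matrix.one_mulVec,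
    dotProduct_sub, dotProduct_smul, smul_eq_mul]
  nlinarith [abs_nonneg lmin]

/-- For a 2-nonnegative curvature operator `R` with smallest eigenvalue `λ_min`, every
eigenvalue of the Ricci tensor of `R` is at least `(n−3)·|λ_min|`. -/
theorem stmt_14 {n : ℕ} (hn : 3 ≤ n) (R : Module.End ℝ (so n)) (hR : isCurvOp R)
    (h2 : twoNonneg R) (lmin : ℝ)
    (heig : ∃ X : so n, X ≠ 0 ∧ R X = lmin • X)
    (hlb : ∀ X : so n, lmin * ip X X ≤ ip (R X) X) :
    (RicM R - (((n : ℝ) - 3) * |lmin|) • (1 : Mat n)).PosSemidef :=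
  stmt_14_general R hR h2 lmin heig hlb

end BW
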